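/- Let q ≥ 1, let Σ₁ ⊆ E₁, …, Σ_q ⊆ E_q be nonempty subsets of Euclidean spaces, equip the product E = E₁ × ⋯ × E_q with the ℓ²-product norm ‖(x₁,…,x_q)‖₂ = √(Σᵢ ‖xᵢ‖₂²), and set Σ = Σ₁ × ⋯ × Σ_q. For each i let β_i⋆ be the infimum of the restricted Lipschitz constants over all generalized projections onto Σᵢ, and suppose P_i is a generalized projection onto Σᵢ achieving β_i⋆. Then the component-wise map P_Σ(z) = (P₁(z₁), …, P_q(z_q)) is an optimal generalized projection onto Σ: its restricted Lipschitz constant equals max_i β_i⋆, and no generalized projection onto Σ has a strictly smaller restricted Lipschitz constant. -/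

import Mathlib

/-!
The upper bound is componentwise: squaring, the ℓ²-norm of `P_Σ z - x` is the sum of the
squared component errors, each at most `(max_i β_i⋆)²` times the squared component distance.
For the lower bound, a projection `Q` onto `Σ` restricts to the slice through a fixed point
`b ∈ Σ` in which only the `i`-th coordinate varies; taking the `i`-th component gives a
projection onto `Σᵢ` with the same restricted constant, since the slice is isometric to `Eᵢ`
and taking a component does not increase the norm. Hence that constant is at least `β_i⋆`.
-/

open Function

def IsRestrictedLipschitz {E : Type*} [SeminormedAddCommGroup E] (P : E → E) (S : Set E)
    (β : ℝ) : Prop :=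
  ∀ z, ∀ x ∈ S, ‖P z - x‖ ≤ β * ‖z - x‖

theorem IsRestrictedLipschitz.mono {E : Type*} [SeminormedAddCommGroup E] {P : E → E}
    {S : Set E} {β β' : ℝ} (h : IsRestrictedLipschitz P S β) (hβ : β ≤ β') :
    IsRestrictedLipschitz P S β' := fun z x hx =>
  (h z x hx).trans (mul_le_mul_of_nonneg_right hβ (norm_nonneg _))

namespace PiLp

variable {ι : Type*} [Fintype ι] {E : ι → Type*} [∀ i, SeminormedAddCommGroup (E i)]

theorem norm_le_mul_of_forall_norm_apply_le {v w : PiLp 2 E} {c : ℝ}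
    (h : ∀ i, ‖v i‖ ≤ c * ‖w i‖) : ‖v‖ ≤ c * ‖w‖ := by
  rcases le_or_gt 0 c with hc | hc
  · rw [norm_eq_of_L2, norm_eq_of_L2, ← Real.sqrt_sq hc, ← Real.sqrt_mul (sq_nonneg c),
      Finset.mul_sum]
    refine Real.sqrt_le_sqrt (Finset.sum_le_sum fun i _ => ?_)
    rw [← mul_pow]
    exact pow_le_pow_left₀ (norm_nonneg _) (h i) 2
  · have hw : ∀ i, ‖w i‖ = 0 := fun i =>
      le_antisymm (nonpos_of_mul_nonneg_right ((norm_nonneg _).trans (h i)) hc) (norm_nonneg _)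
    have hv : ∀ i, ‖v i‖ = 0 := fun i =>
      le_antisymm (by simpa [hw i] using h i) (norm_nonneg _)
    simp [norm_eq_of_L2, hv, hw]

end PiLp

section Product

variable {ι : Type*} [Fintype ι] {E : ι → Type*} [∀ i, SeminormedAddCommGroup (E i)]
  {S : ∀ i, Set (E i)}

theorem IsRestrictedLipschitz.piLp {P : ∀ i, E i → E i} {PS : PiLp 2 E → PiLp 2 E}
    (hPS : ∀ z i, PS z i = P i (z i)) {c : ℝ} (h : ∀ i, IsRestrictedLipschitz (P i) (S i) c) :
    IsRestrictedLipschitz PS {z | ∀ i, z i ∈ S i} c := fun z x hx =>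
  PiLp.norm_le_mul_of_forall_norm_apply_le fun i => by
    simpa only [PiLp.sub_apply, hPS] using h i (z i) (x i) (hx i)

theorem IsRestrictedLipschitz.slice [DecidableEq ι] {Q : PiLp 2 E → PiLp 2 E} {β : ℝ}
    (hQ : IsRestrictedLipschitz Q {z | ∀ i, z i ∈ S i} β) {b : ∀ i, E i}
    (hb : ∀ i, b i ∈ S i) (i : ι) :
    IsRestrictedLipschitz (fun w => Q (WithLp.toLp 2 (update b i w)) i) (S i) β := by
  intro w x hx
  have hsub : WithLp.toLp 2 (update b i w) - WithLp.toLp 2 (update b i x) =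
      PiLp.single 2 i (w - x) := by
    ext j
    by_cases hj : j = i
    · subst hj; simp
    · simp [hj]
  have hmem : WithLp.toLp 2 (update b i x) ∈ {z : PiLp 2 E | ∀ i, z i ∈ S i} := by
    intro j
    by_cases hj : j = i
    · subst hj; simpa using hx
    · simpa [hj] using hb j
  calc ‖Q (WithLp.toLp 2 (update b i w)) i - x‖
      = ‖(Q (WithLp.toLp 2 (update b i w)) - WithLp.toLp 2 (update b i x)) i‖ := by simp
    _ ≤ ‖Q (WithLp.toLp 2 (update b i w)) - WithLp.toLp 2 (update b i x)‖ :=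
      PiLp.norm_apply_le _ i
    _ ≤ β * ‖w - x‖ := by
      simpa only [hsub, PiLp.norm_single] using hQ (WithLp.toLp 2 (update b i w)) _ hmem

end Product

/-- Optimality of the component-wise projection onto a `q`-fold product model
`Σ = Σ₁ × ⋯ × Σ_q` (with the ℓ²-product norm): if each `P i` achieves the
optimal restricted Lipschitz constant `βs i` for `S i`, then the component-wise
map `P_Σ` is a generalized projection onto `Σ` admitting the restricted
Lipschitz constant `⨆ i, βs i = max_i βs i`, and no generalized projection
onto `Σ` admits a strictly smaller constant. -/
theorem multi_product_projection_optimal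
    (q : ℕ) (hq : 1 ≤ q) (Nd : Fin q → ℕ)
    (S : ∀ i : Fin q, Set (EuclideanSpace ℝ (Fin (Nd i))))
    (hS : ∀ i, (S i).Nonempty)
    (βs : Fin q → ℝ)
    -- each βs i is a lower bound of the admissible restricted Lipschitz
    -- constants over all generalized projections onto S i (it is their
    -- infimum, being achieved by P i below).
    (hβlb : ∀ i, ∀ P : EuclideanSpace ℝ (Fin (Nd i)) → EuclideanSpace ℝ (Fin (Nd i)),
      (∀ z, P z ∈ S i) → ∀ β : ℝ,
        (∀ z, ∀ x ∈ S i, ‖P z - x‖ ≤ β * ‖z - x‖) → βs i ≤ β)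
    (P : ∀ i : Fin q, EuclideanSpace ℝ (Fin (Nd i)) → EuclideanSpace ℝ (Fin (Nd i)))
    (hPmem : ∀ i, ∀ z, P i z ∈ S i)
    (hPlip : ∀ i, ∀ z, ∀ x ∈ S i, ‖P i z - x‖ ≤ βs i * ‖z - x‖)
    (PS : PiLp 2 (fun i : Fin q => EuclideanSpace ℝ (Fin (Nd i))) →
          PiLp 2 (fun i : Fin q => EuclideanSpace ℝ (Fin (Nd i))))
    (hPS : ∀ z, ∀ i, PS z i = P i (z i))
    (SS : Set (PiLp 2 (fun i : Fin q => EuclideanSpace ℝ (Fin (Nd i)))))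
    (hSS : SS = {z | ∀ i, z i ∈ S i}) :
    -- P_Σ is a generalized projection onto Σ,
    (∀ z, PS z ∈ SS) ∧
    -- its restricted Lipschitz constant is (at most) max_i βs i,
    (∀ z, ∀ x ∈ SS, ‖PS z - x‖ ≤ (⨆ i, βs i) * ‖z - x‖) ∧
    -- and no generalized projection onto Σ admits a strictly smaller constant,
    -- so the restricted Lipschitz constant of P_Σ equals max_i βs i and P_Σ
    -- is optimal.
    (∀ Q : PiLp 2 (fun i : Fin q => EuclideanSpace ℝ (Fin (Nd i))) →
           PiLp 2 (fun i : Fin q => EuclideanSpace ℝ (Fin (Nd i))),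
      (∀ z, Q z ∈ SS) → ∀ β : ℝ,
        (∀ z, ∀ x ∈ SS, ‖Q z - x‖ ≤ β * ‖z - x‖) → (⨆ i, βs i) ≤ β) := by
  subst hSS
  refine ⟨fun z i => hPS z i ▸ hPmem i (z i), ?_, fun Q hQmem β hQ => ?_⟩
  · have hle : ∀ i, βs i ≤ ⨆ i, βs i := le_ciSup (Set.finite_range βs).bddAbove
    exact IsRestrictedLipschitz.piLp hPS fun i => IsRestrictedLipschitz.mono (hPlip i) (hle i)
  · have : Nonempty (Fin q) := ⟨⟨0, hq⟩⟩
    choose b hb using hS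
    exact ciSup_le fun i => hβlb i _ (fun w => hQmem _ i) β (IsRestrictedLipschitz.slice hQ hb i)
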